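/- Let N, D be positive natural numbers and n = N·D. Let 𝕂 be a real symmetric n×n matrix, Δ a real diagonal n×n matrix with 𝕂 + Δ invertible, and set Ω := (𝕂 + Δ)⁻¹. Let M be the N×n matrix formed by the first N rows of 𝕂, let m₁ ∈ ℝᴺ, m ∈ ℝⁿ, y ∈ ℝⁿ, and let Σ₁₁ be a real symmetric positive definite N×N matrix. Define the marginal posterior means μ₁ := m₁ + M·Ω·(y − m) and, for a contaminated observation vector yᶜ := y + δ·e_j (with j ∈ {1,…,n}, δ ∈ ℝ, and e_j the j-th standard basis vector), μ₁ᶜ := m₁ + M·Ω·(yᶜ − m). Then the Kullback–Leibler divergence between the multivariate Gaussian measures N(μ₁, Σ₁₁) and N(μ₁ᶜ, Σ₁₁) on ℝᴺ equals ENNReal.ofReal( C₁·δ² ), where C₁ := (1/2)·[ Ωᵀ Mᵀ Σ₁₁⁻¹ M Ω ]_{jj} ≥ 0 does not depend on δ. In particular, the posterior influence function of a standard multi-output Gaussian process grows quadratically—and hence unboundedly—in the contamination magnitude whenever C₁ > 0, so the standard MOGP is not robust to outliers. -/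

import Mathlib

/-
The two posteriors are Gaussians with the same covariance `S₁₁`, whose means differ by
`-δ • M Ω e_j`. For `N(a, S)` and `N(b, S)` the log-likelihood ratio is the affine function
`(x - a) ⬝ᵥ S⁻¹ (a - b) + ½ (a - b) ⬝ᵥ S⁻¹ (a - b)`, and its linear part has mean zero under
`N(a, S)` by the symmetry `x ↦ 2a - x`; hence `KL = ½ (a - b) ⬝ᵥ S⁻¹ (a - b)`, which for
`a - b = -δ M Ω e_j` is `½ δ² [Ωᵀ Mᵀ S₁₁⁻¹ M Ω]_jj`, nonnegative because `S₁₁⁻¹` is positive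
definite.

The analytic input: writing `S = A Aᵀ` and `x = a + A z` factors the density of `N(a, S)` into
one-dimensional standard Gaussian densities, which gives its normalisation; and completing the
square, `exp((x - a) ⬝ᵥ w) N(a, S) = exp(½ w ⬝ᵥ S w) N(a + S w, S)`, together with
`|t| ≤ eᵗ + e⁻ᵗ`, makes the linear part integrable.
-/
open Matrix MeasureTheory

open Classical in
/-- The Kullback–Leibler divergence `∫ log(dμ/dν) dμ` when `μ ≪ ν` with integrable
log-density, and `∞` otherwise. -/
noncomputable def klDiv {α : Type*} [MeasurableSpace α] (μ ν : Measure α) : ENNReal :=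
  if μ ≪ ν ∧ Integrable (MeasureTheory.llr μ ν) μ then
    ENNReal.ofReal (∫ x, MeasureTheory.llr μ ν x ∂μ)
  else ⊤

/-- The multivariate Gaussian measure `N(μ, Σ)` on `ℝᴺ`, given by its density with
respect to Lebesgue measure. -/
noncomputable def multivariateGaussian {N : ℕ} (μv : Fin N → ℝ)
    (S : Matrix (Fin N) (Fin N) ℝ) : Measure (Fin N → ℝ) :=
  volume.withDensity fun x =>
    ENNReal.ofReal ((Real.sqrt ((2 * Real.pi) ^ N * S.det))⁻¹ *
      Real.exp (-(1 / 2 : ℝ) * ((x - μv) ⬝ᵥ (S⁻¹ *ᵥ (x - μv)))))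

section AffineChangeOfVariables

variable {ι : Type*} [Fintype ι] [DecidableEq ι] {A : Matrix ι ι ℝ}

theorem measurableEmbedding_mulVec (hA : A.det ≠ 0) : MeasurableEmbedding (A *ᵥ ·) := by
  let _ := A.invertibleOfIsUnitDet hA.isUnit
  exact (A.toLinearEquiv' ‹_›).toContinuousLinearEquiv.toHomeomorph.measurableEmbedding

theorem map_mulVec_volume (hA : A.det ≠ 0) :
    Measure.map (A *ᵥ ·) (volume : Measure (ι → ℝ)) = ENNReal.ofReal |A.det|⁻¹ • volume := by
  rw [← abs_inv]
  exact Real.map_matrix_volume_pi_eq_smul_volume_pi hA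

theorem integral_comp_add_mulVec (hA : A.det ≠ 0) (a : ι → ℝ) (f : (ι → ℝ) → ℝ) :
    ∫ z, f (a + A *ᵥ z) = |A.det|⁻¹ * ∫ x, f x := by
  rw [← (measurableEmbedding_mulVec hA).integral_map (fun x => f (a + x)), map_mulVec_volume hA,
    integral_smul_measure, integral_add_left_eq_self, ENNReal.toReal_ofReal (by positivity),
    smul_eq_mul]

theorem integrable_comp_add_mulVec_iff (hA : A.det ≠ 0) (a : ι → ℝ) (f : (ι → ℝ) → ℝ) :
    Integrable (fun z => f (a + A *ᵥ z)) ↔ Integrable f := by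
  have hc : ENNReal.ofReal |A.det|⁻¹ ≠ 0 := by simpa using hA
  rw [← Function.comp_def (fun x => f (a + x)),
    ← (measurableEmbedding_mulVec hA).integrable_map_iff,
    map_mulVec_volume hA, integrable_smul_measure hc ENNReal.ofReal_ne_top]
  exact ⟨fun h => by simpa using h.comp_add_left (-a), fun h => h.comp_add_left a⟩

end AffineChangeOfVariables

section Whitening

variable {ι : Type*} [Fintype ι] [DecidableEq ι] {S A : Matrix ι ι ℝ}

theorem Matrix.PosDef.exists_mul_transpose_eq (hS : S.PosDef) :
    ∃ A : Matrix ι ι ℝ, A * Aᵀ = S ∧ A.det ≠ 0 := by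
  open scoped Matrix.Norms.L2Operator MatrixOrder in
  obtain ⟨B, hB⟩ := CStarAlgebra.nonneg_iff_eq_star_mul_self.mp hS.posSemidef.nonneg
  have hBS : Bᵀ * Bᵀᵀ = S := by
    rw [transpose_transpose, hB, star_eq_conjTranspose, conjTranspose_eq_transpose_of_trivial]
  refine ⟨Bᵀ, hBS, fun h => hS.det_pos.ne' ?_⟩
  rw [← hBS, det_mul, h, zero_mul]

theorem mulVec_dotProduct_inv_mulVec_mulVec (hAS : A * Aᵀ = S) (hA : A.det ≠ 0) (z : ι → ℝ) :
    (A *ᵥ z) ⬝ᵥ (S⁻¹ *ᵥ (A *ᵥ z)) = z ⬝ᵥ z := by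
  have hA' : IsUnit A.det := hA.isUnit
  subst hAS
  rw [Matrix.mul_inv_rev, ← mulVec_mulVec, mulVec_mulVec (M := A⁻¹), nonsing_inv_mul _ hA',
    one_mulVec, dotProduct_mulVec, ← mulVec_transpose, mulVec_mulVec, ← transpose_nonsing_inv,
    transpose_transpose, nonsing_inv_mul _ hA', one_mulVec]

end Whitening

noncomputable def multivariateGaussianPDF {N : ℕ} (μv : Fin N → ℝ) (S : Matrix (Fin N) (Fin N) ℝ)
    (x : Fin N → ℝ) : ℝ :=
  (Real.sqrt ((2 * Real.pi) ^ N * S.det))⁻¹ *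
    Real.exp (-(1 / 2 : ℝ) * ((x - μv) ⬝ᵥ (S⁻¹ *ᵥ (x - μv))))

section MultivariateGaussian

variable {N : ℕ} {S : Matrix (Fin N) (Fin N) ℝ}

theorem multivariateGaussian_eq_withDensity (μv : Fin N → ℝ) (S : Matrix (Fin N) (Fin N) ℝ) :
    multivariateGaussian μv S =
      volume.withDensity fun x => ENNReal.ofReal (multivariateGaussianPDF μv S x) :=
  rfl

theorem multivariateGaussianPDF_nonneg (a : Fin N → ℝ) (S : Matrix (Fin N) (Fin N) ℝ)
    (x : Fin N → ℝ) : 0 ≤ multivariateGaussianPDF a S x := by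
  unfold multivariateGaussianPDF
  positivity

theorem multivariateGaussianPDF_pos (hS : S.PosDef) (a x : Fin N → ℝ) :
    0 < multivariateGaussianPDF a S x := by
  have := hS.det_pos
  unfold multivariateGaussianPDF
  positivity

theorem continuous_multivariateGaussianPDF (a : Fin N → ℝ) (S : Matrix (Fin N) (Fin N) ℝ) :
    Continuous (multivariateGaussianPDF a S) := by
  unfold multivariateGaussianPDF
  simp only [dotProduct, mulVec]
  fun_prop

open ProbabilityTheory in
theorem multivariateGaussianPDF_add_mulVec {A : Matrix (Fin N) (Fin N) ℝ} (hAS : A * Aᵀ = S)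
    (hA : A.det ≠ 0) (a z : Fin N → ℝ) :
    multivariateGaussianPDF a S (a + A *ᵥ z) = |A.det|⁻¹ * ∏ i, gaussianPDFReal 0 1 (z i) := by
  have hdet : S.det = A.det ^ 2 := by rw [← hAS, det_mul, det_transpose, sq]
  have hsqrt : √((2 * Real.pi) ^ N) = √(2 * Real.pi) ^ N := by
    rw [Real.sqrt_eq_iff_mul_self_eq (by positivity) (by positivity), ← mul_pow,
      Real.mul_self_sqrt (by positivity)]
  rw [multivariateGaussianPDF, add_sub_cancel_left, mulVec_dotProduct_inv_mulVec_mulVec hAS hA,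
    hdet, Real.sqrt_mul (by positivity), Real.sqrt_sq_eq_abs, hsqrt]
  simp only [gaussianPDFReal, Finset.prod_mul_distrib, Finset.prod_const, Finset.card_univ,
    Fintype.card_fin, ← Real.exp_sum, dotProduct, NNReal.coe_one, mul_one, sub_zero,
    Finset.mul_sum, mul_inv, inv_pow]
  ring_nf

theorem integrable_multivariateGaussianPDF (hS : S.PosDef) (a : Fin N → ℝ) :
    Integrable (multivariateGaussianPDF a S) := by
  obtain ⟨A, hAS, hA⟩ := hS.exists_mul_transpose_eq
  rw [← integrable_comp_add_mulVec_iff hA a]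
  simp_rw [multivariateGaussianPDF_add_mulVec hAS hA]
  exact (Integrable.fintype_prod fun _ =>
    ProbabilityTheory.integrable_gaussianPDFReal 0 1).const_mul _

theorem integral_multivariateGaussianPDF (hS : S.PosDef) (a : Fin N → ℝ) :
    ∫ x, multivariateGaussianPDF a S x = 1 := by
  obtain ⟨A, hAS, hA⟩ := hS.exists_mul_transpose_eq
  have h := integral_comp_add_mulVec hA a (multivariateGaussianPDF a S)
  simp_rw [multivariateGaussianPDF_add_mulVec hAS hA] at h
  rw [integral_const_mul, integral_fintype_prod_volume_eq_prod] at h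
  simp only [ProbabilityTheory.integral_gaussianPDFReal_eq_one 0 one_ne_zero,
    Finset.prod_const_one, mul_one] at h
  have : |A.det|⁻¹ ≠ 0 := by simpa using hA
  exact (mul_eq_left₀ this).mp h.symm

theorem isProbabilityMeasure_multivariateGaussian (hS : S.PosDef) (a : Fin N → ℝ) :
    IsProbabilityMeasure (multivariateGaussian a S) := by
  constructor
  rw [multivariateGaussian_eq_withDensity, withDensity_apply _ MeasurableSet.univ,
    setLIntegral_univ, ← ofReal_integral_eq_lintegral_ofReal
      (integrable_multivariateGaussianPDF hS a) (.of_forall (multivariateGaussianPDF_nonneg a S)),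
    integral_multivariateGaussianPDF hS a, ENNReal.ofReal_one]

theorem integrable_multivariateGaussian_iff (a : Fin N → ℝ) (S : Matrix (Fin N) (Fin N) ℝ)
    {f : (Fin N → ℝ) → ℝ} :
    Integrable f (multivariateGaussian a S) ↔
      Integrable fun x => multivariateGaussianPDF a S x * f x := by
  rw [multivariateGaussian_eq_withDensity, integrable_withDensity_iff_integrable_smul'
    (continuous_multivariateGaussianPDF a S).measurable.ennreal_ofReal
    (.of_forall fun _ => ENNReal.ofReal_lt_top)]
  simp [ENNReal.toReal_ofReal (multivariateGaussianPDF_nonneg a S _)]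

theorem integral_multivariateGaussian (a : Fin N → ℝ) (S : Matrix (Fin N) (Fin N) ℝ)
    (f : (Fin N → ℝ) → ℝ) :
    ∫ x, f x ∂multivariateGaussian a S = ∫ x, multivariateGaussianPDF a S x * f x := by
  rw [multivariateGaussian_eq_withDensity, integral_withDensity_eq_integral_toReal_smul
    (continuous_multivariateGaussianPDF a S).measurable.ennreal_ofReal
    (.of_forall fun _ => ENNReal.ofReal_lt_top)]
  simp [ENNReal.toReal_ofReal (multivariateGaussianPDF_nonneg a S _)]

theorem exp_dotProduct_mul_multivariateGaussianPDF (hS : S.IsSymm) (hdet : IsUnit S.det)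
    (a w x : Fin N → ℝ) :
    Real.exp ((x - a) ⬝ᵥ w) * multivariateGaussianPDF a S x =
      Real.exp (1 / 2 * (w ⬝ᵥ (S *ᵥ w))) * multivariateGaussianPDF (a + S *ᵥ w) S x := by
  have hinv : S⁻¹ *ᵥ (S *ᵥ w) = w := by rw [mulVec_mulVec, nonsing_inv_mul _ hdet, one_mulVec]
  have hsymm : ∀ y, (S *ᵥ w) ⬝ᵥ (S⁻¹ *ᵥ y) = w ⬝ᵥ y := fun y => by
    rw [dotProduct_mulVec, ← mulVec_transpose, transpose_nonsing_inv, hS.eq, hinv]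
  have hquad : (x - (a + S *ᵥ w)) ⬝ᵥ (S⁻¹ *ᵥ (x - (a + S *ᵥ w))) =
      (x - a) ⬝ᵥ (S⁻¹ *ᵥ (x - a)) - 2 * ((x - a) ⬝ᵥ w) + w ⬝ᵥ (S *ᵥ w) := by
    rw [← sub_sub, mulVec_sub, hinv, sub_dotProduct, dotProduct_sub, dotProduct_sub, hsymm,
      dotProduct_comm w (x - a), dotProduct_comm (S *ᵥ w) w]
    ring
  unfold multivariateGaussianPDF
  rw [hquad, mul_left_comm, ← Real.exp_add, mul_left_comm, ← Real.exp_add]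
  ring_nf

theorem integrable_dotProduct_mul_multivariateGaussianPDF (hS : S.PosDef) (a w : Fin N → ℝ) :
    Integrable fun x => ((x - a) ⬝ᵥ w) * multivariateGaussianPDF a S x := by
  have hsymm : S.IsSymm := isHermitian_iff_isSymm.mp hS.isHermitian
  have hdet : IsUnit S.det := hS.det_pos.ne'.isUnit
  have hbound := ((integrable_multivariateGaussianPDF hS (a + S *ᵥ w)).const_mul
    (Real.exp (1 / 2 * (w ⬝ᵥ (S *ᵥ w))))).add
    ((integrable_multivariateGaussianPDF hS (a + S *ᵥ (-w))).const_mul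
      (Real.exp (1 / 2 * ((-w) ⬝ᵥ (S *ᵥ (-w))))))
  refine hbound.mono' (((continuous_id.sub continuous_const).dotProduct continuous_const).mul
    (continuous_multivariateGaussianPDF a S)).aestronglyMeasurable (.of_forall fun x => ?_)
  rw [Pi.add_apply, ← exp_dotProduct_mul_multivariateGaussianPDF hsymm hdet,
    ← exp_dotProduct_mul_multivariateGaussianPDF hsymm hdet, dotProduct_neg, norm_mul,
    Real.norm_of_nonneg (multivariateGaussianPDF_nonneg a S x), ← add_mul]
  have habs : |(x - a) ⬝ᵥ w| ≤ Real.exp ((x - a) ⬝ᵥ w) + Real.exp (-((x - a) ⬝ᵥ w)) := by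
    rcases abs_cases ((x - a) ⬝ᵥ w) with ⟨h, -⟩ | ⟨h, -⟩ <;> rw [h] <;>
      linarith [Real.add_one_le_exp ((x - a) ⬝ᵥ w), Real.add_one_le_exp (-((x - a) ⬝ᵥ w)),
        Real.exp_pos ((x - a) ⬝ᵥ w), Real.exp_pos (-((x - a) ⬝ᵥ w))]
  exact mul_le_mul_of_nonneg_right habs (multivariateGaussianPDF_nonneg a S x)

theorem integral_dotProduct_mul_multivariateGaussianPDF (a w : Fin N → ℝ)
    (S : Matrix (Fin N) (Fin N) ℝ) :
    ∫ x, ((x - a) ⬝ᵥ w) * multivariateGaussianPDF a S x = 0 := by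
  set h : (Fin N → ℝ) → ℝ := fun z => (z ⬝ᵥ w) * multivariateGaussianPDF a S (a + z)
  have hodd : ∀ z, h (-z) = -h z := fun z => by
    simp only [h, multivariateGaussianPDF, add_sub_cancel_left, mulVec_neg, neg_dotProduct,
      dotProduct_neg, neg_neg, neg_mul]
  -- `h` is odd; this needs no integrability, as a non-integrable `h` has integral `0` anyway.
  have hint : ∫ z, h z = -∫ z, h z := by
    rw [← integral_neg, ← integral_neg_eq_self]
    simp only [hodd]
  have hshift := integral_add_left_eq_self (μ := volume)
    (fun x => ((x - a) ⬝ᵥ w) * multivariateGaussianPDF a S x) a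
  simp only [add_sub_cancel_left] at hshift
  rw [← hshift]
  linarith

theorem multivariateGaussianPDF_div (hS : S.PosDef) (a b x : Fin N → ℝ) :
    multivariateGaussianPDF a S x / multivariateGaussianPDF b S x =
      Real.exp ((x - a) ⬝ᵥ (S⁻¹ *ᵥ (a - b)) + 1 / 2 * ((a - b) ⬝ᵥ (S⁻¹ *ᵥ (a - b)))) := by
  have hdet : IsUnit S.det := hS.det_pos.ne'.isUnit
  have hSS : S *ᵥ (S⁻¹ *ᵥ (a - b)) = a - b := by
    rw [mulVec_mulVec, mul_nonsing_inv _ hdet, one_mulVec]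
  have htilt := exp_dotProduct_mul_multivariateGaussianPDF
    (isHermitian_iff_isSymm.mp hS.isHermitian) hdet b (S⁻¹ *ᵥ (a - b)) x
  rw [hSS, add_sub_cancel] at htilt
  have hexponent : (x - a) ⬝ᵥ (S⁻¹ *ᵥ (a - b)) + 1 / 2 * ((a - b) ⬝ᵥ (S⁻¹ *ᵥ (a - b))) =
      (x - b) ⬝ᵥ (S⁻¹ *ᵥ (a - b)) - 1 / 2 * ((S⁻¹ *ᵥ (a - b)) ⬝ᵥ (a - b)) := by
    rw [show x - b = (x - a) + (a - b) by abel, add_dotProduct, dotProduct_comm _ (a - b)]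
    ring
  rw [div_eq_iff (multivariateGaussianPDF_pos hS b x).ne', hexponent, Real.exp_sub,
    div_mul_eq_mul_div, htilt, mul_div_cancel_left₀ _ (Real.exp_pos _).ne']

theorem measurable_ofReal_multivariateGaussianPDF_div (a b : Fin N → ℝ)
    (S : Matrix (Fin N) (Fin N) ℝ) :
    Measurable fun x =>
      ENNReal.ofReal (multivariateGaussianPDF a S x / multivariateGaussianPDF b S x) :=
  ((continuous_multivariateGaussianPDF a S).measurable.div
    (continuous_multivariateGaussianPDF b S).measurable).ennreal_ofReal

theorem multivariateGaussian_eq_withDensity_div (hS : S.PosDef) (a b : Fin N → ℝ) :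
    multivariateGaussian a S = (multivariateGaussian b S).withDensity fun x =>
      ENNReal.ofReal (multivariateGaussianPDF a S x / multivariateGaussianPDF b S x) := by
  rw [multivariateGaussian_eq_withDensity, multivariateGaussian_eq_withDensity,
    ← withDensity_mul _ (continuous_multivariateGaussianPDF b S).measurable.ennreal_ofReal
      (measurable_ofReal_multivariateGaussianPDF_div a b S)]
  congr 1
  funext x
  rw [Pi.mul_apply, ← ENNReal.ofReal_mul (multivariateGaussianPDF_nonneg b S x),
    mul_div_cancel₀ _ (multivariateGaussianPDF_pos hS b x).ne']

theorem llr_multivariateGaussian (hS : S.PosDef) (a b : Fin N → ℝ) :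
    llr (multivariateGaussian a S) (multivariateGaussian b S) =ᵐ[multivariateGaussian a S]
      fun x => (x - a) ⬝ᵥ (S⁻¹ *ᵥ (a - b)) + 1 / 2 * ((a - b) ⬝ᵥ (S⁻¹ *ᵥ (a - b))) := by
  have := isProbabilityMeasure_multivariateGaussian hS b
  have hμν := multivariateGaussian_eq_withDensity_div hS a b
  have hrn := Measure.rnDeriv_withDensity (multivariateGaussian b S)
    (measurable_ofReal_multivariateGaussianPDF_div a b S)
  rw [← hμν] at hrn
  filter_upwards [(hμν ▸ withDensity_absolutelyContinuous _ _ :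
    multivariateGaussian a S ≪ multivariateGaussian b S).ae_le hrn] with x hx
  rw [llr, hx, ENNReal.toReal_ofReal (div_nonneg (multivariateGaussianPDF_nonneg a S x)
    (multivariateGaussianPDF_nonneg b S x)), multivariateGaussianPDF_div hS, Real.log_exp]

theorem klDiv_multivariateGaussian (hS : S.PosDef) (a b : Fin N → ℝ) :
    klDiv (multivariateGaussian a S) (multivariateGaussian b S) =
      ENNReal.ofReal (1 / 2 * ((a - b) ⬝ᵥ (S⁻¹ *ᵥ (a - b)))) := by
  have hllr := llr_multivariateGaussian hS a b
  set c := 1 / 2 * ((a - b) ⬝ᵥ (S⁻¹ *ᵥ (a - b)))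
  have hac : multivariateGaussian a S ≪ multivariateGaussian b S := by
    rw [multivariateGaussian_eq_withDensity_div hS a b]
    exact withDensity_absolutelyContinuous _ _
  have hsplit : ∀ x, multivariateGaussianPDF a S x * ((x - a) ⬝ᵥ (S⁻¹ *ᵥ (a - b)) + c) =
      ((x - a) ⬝ᵥ (S⁻¹ *ᵥ (a - b))) * multivariateGaussianPDF a S x +
        c * multivariateGaussianPDF a S x := fun x => by ring
  have hint_linear := integrable_dotProduct_mul_multivariateGaussianPDF hS a (S⁻¹ *ᵥ (a - b))
  have hint_const := (integrable_multivariateGaussianPDF hS a).const_mul c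
  have hint : Integrable (llr (multivariateGaussian a S) (multivariateGaussian b S))
      (multivariateGaussian a S) := by
    rw [integrable_congr hllr, integrable_multivariateGaussian_iff]
    simp_rw [hsplit]
    exact hint_linear.add hint_const
  rw [klDiv, if_pos ⟨hac, hint⟩, integral_congr_ae hllr, integral_multivariateGaussian]
  simp_rw [hsplit]
  rw [integral_add hint_linear hint_const, integral_dotProduct_mul_multivariateGaussianPDF,
    integral_const_mul, integral_multivariateGaussianPDF hS, zero_add, mul_one]

end MultivariateGaussian

theorem mulVec_dotProduct_mulVec_mulVec {m n R : Type*} [Fintype m] [Fintype n] [CommSemiring R]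
    (W : Matrix m n R) (Q : Matrix m m R) (x : n → R) :
    (W *ᵥ x) ⬝ᵥ (Q *ᵥ (W *ᵥ x)) = x ⬝ᵥ ((Wᵀ * Q * W) *ᵥ x) := by
  rw [← mulVec_mulVec, ← mulVec_mulVec, dotProduct_mulVec x, vecMul_transpose]

theorem mogp_pif_quadratic_general
    (N D : ℕ) (hD : 0 < D)
    (𝕂 : Matrix (Fin (N * D)) (Fin (N * D)) ℝ)
    (Δ : Matrix (Fin (N * D)) (Fin (N * D)) ℝ)
    (m₁ : Fin N → ℝ) (m y : Fin (N * D) → ℝ)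
    (S₁₁ : Matrix (Fin N) (Fin N) ℝ) (hS₁₁ : S₁₁.PosDef)
    (j : Fin (N * D)) (δ : ℝ) :
    0 ≤ (1 / 2 : ℝ) *
        (((𝕂 + Δ)⁻¹ᵀ * (𝕂.submatrix (Fin.castLE (Nat.le_mul_of_pos_right N hD)) id)ᵀ *
            S₁₁⁻¹ * 𝕂.submatrix (Fin.castLE (Nat.le_mul_of_pos_right N hD)) id *
            (𝕂 + Δ)⁻¹) j j) ∧
    klDiv
        (multivariateGaussian
          (m₁ + (𝕂.submatrix (Fin.castLE (Nat.le_mul_of_pos_right N hD)) id * (𝕂 + Δ)⁻¹) *ᵥ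
            (y - m)) S₁₁)
        (multivariateGaussian
          (m₁ + (𝕂.submatrix (Fin.castLE (Nat.le_mul_of_pos_right N hD)) id * (𝕂 + Δ)⁻¹) *ᵥ
            ((y + δ • (Pi.single j 1 : Fin (N * D) → ℝ)) - m)) S₁₁)
      = ENNReal.ofReal
          ((1 / 2 : ℝ) *
            (((𝕂 + Δ)⁻¹ᵀ * (𝕂.submatrix (Fin.castLE (Nat.le_mul_of_pos_right N hD)) id)ᵀ *
                S₁₁⁻¹ * 𝕂.submatrix (Fin.castLE (Nat.le_mul_of_pos_right N hD)) id *
                (𝕂 + Δ)⁻¹) j j) * δ ^ 2) := by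
  set M := 𝕂.submatrix (Fin.castLE (Nat.le_mul_of_pos_right N hD)) id
  set Ω := (𝕂 + Δ)⁻¹
  set e : Fin (N * D) → ℝ := Pi.single j 1
  have hentry : ((M * Ω) *ᵥ e) ⬝ᵥ (S₁₁⁻¹ *ᵥ ((M * Ω) *ᵥ e)) = (Ωᵀ * Mᵀ * S₁₁⁻¹ * M * Ω) j j := by
    rw [mulVec_dotProduct_mulVec_mulVec, transpose_mul]
    simp [e, Matrix.mul_assoc]
  have hmeans : (m₁ + (M * Ω) *ᵥ (y - m)) - (m₁ + (M * Ω) *ᵥ ((y + δ • e) - m)) =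
      (-δ) • (M * Ω) *ᵥ e := by
    rw [add_sub_add_left_eq_sub, ← mulVec_sub, ← mulVec_smul, neg_smul]
    congr 1
    abel
  refine ⟨mul_nonneg one_half_pos.le (hentry ▸ hS₁₁.inv.posSemidef.dotProduct_mulVec_nonneg _), ?_⟩
  rw [klDiv_multivariateGaussian hS₁₁, hmeans, mulVec_smul, smul_dotProduct, dotProduct_smul,
    hentry, smul_eq_mul, smul_eq_mul]
  ring_nf

/-- The posterior influence function of a standard multi-output Gaussian process:
contaminating the `j`-th observation by `δ` changes the marginal posterior over the
first output channel by a KL divergence of exactly `C₁ δ²` with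
`C₁ = (1/2)[Ωᵀ Mᵀ S₁₁⁻¹ M Ω]_{jj} ≥ 0` independent of `δ`, which grows unboundedly
in `δ` whenever `C₁ > 0`: the MOGP is not robust to outliers. -/
theorem mogp_pif_quadratic
    (N D : ℕ) (hN : 0 < N) (hD : 0 < D)
    (𝕂 : Matrix (Fin (N * D)) (Fin (N * D)) ℝ) (h𝕂 : 𝕂.IsSymm)
    (Δ : Matrix (Fin (N * D)) (Fin (N * D)) ℝ) (hΔ : Δ.IsDiag)
    (hG : IsUnit (𝕂 + Δ).det)
    (m₁ : Fin N → ℝ) (m y : Fin (N * D) → ℝ)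
    (S₁₁ : Matrix (Fin N) (Fin N) ℝ) (hS₁₁ : S₁₁.PosDef)
    (j : Fin (N * D)) (δ : ℝ) :
    0 ≤ (1 / 2 : ℝ) *
        (((𝕂 + Δ)⁻¹ᵀ * (𝕂.submatrix (Fin.castLE (Nat.le_mul_of_pos_right N hD)) id)ᵀ *
            S₁₁⁻¹ * 𝕂.submatrix (Fin.castLE (Nat.le_mul_of_pos_right N hD)) id *
            (𝕂 + Δ)⁻¹) j j) ∧
    klDiv
        (multivariateGaussian
          (m₁ + (𝕂.submatrix (Fin.castLE (Nat.le_mul_of_pos_right N hD)) id * (𝕂 + Δ)⁻¹) *ᵥ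
            (y - m)) S₁₁)
        (multivariateGaussian
          (m₁ + (𝕂.submatrix (Fin.castLE (Nat.le_mul_of_pos_right N hD)) id * (𝕂 + Δ)⁻¹) *ᵥ
            ((y + δ • (Pi.single j 1 : Fin (N * D) → ℝ)) - m)) S₁₁)
      = ENNReal.ofReal
          ((1 / 2 : ℝ) *
            (((𝕂 + Δ)⁻¹ᵀ * (𝕂.submatrix (Fin.castLE (Nat.le_mul_of_pos_right N hD)) id)ᵀ *
                S₁₁⁻¹ * 𝕂.submatrix (Fin.castLE (Nat.le_mul_of_pos_right N hD)) id *
                (𝕂 + Δ)⁻¹) j j) * δ ^ 2) :=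
  mogp_pif_quadratic_general N D hD 𝕂 Δ m₁ m y S₁₁ hS₁₁ j δ
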